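/- arXiv:2409.08990 — 8 statements merged into one kernel-verified Lean document; each statement's English description precedes it below -/
import Mathlib

section
/- A bounded distributive lattice with a unary operation * satisfies (x ∧ y = 0 ↔ x ≤ y*) for all x, y if and only if it satisfies the three equations 1* = 0, 0* = 1, and x ∧ (x ∧ y)* = x ∧ y* for all x, y. -/
/-- A bounded distributive lattice with a unary operation `s` is a p-algebra
(i.e. `x ⊓ y = ⊥ ↔ x ≤ s y` for all `x, y`) iff it satisfies
`s ⊤ = ⊥`, `s ⊥ = ⊤`, and `x ⊓ s (x ⊓ y) = x ⊓ s y`. -/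
theorem stmt_0 {α : Type*} [DistribLattice α] [BoundedOrder α] (s : α → α) :
    (∀ x y : α, x ⊓ y = ⊥ ↔ x ≤ s y) ↔
      (s ⊤ = ⊥ ∧ s ⊥ = ⊤ ∧ ∀ x y : α, x ⊓ s (x ⊓ y) = x ⊓ s y) := by
  constructor
  · intro H
    have key : ∀ y : α, s y ⊓ y = ⊥ := fun y => (H (s y) y).mpr le_rfl
    refine ⟨?_, ?_, ?_⟩
    · have := key ⊤
      simpa using this
    · exact le_antisymm le_top ((H ⊤ ⊥).mp (by simp))
    · intro x y
      apply le_antisymm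
      · refine le_inf inf_le_left ((H _ y).mp ?_)
        have : x ⊓ s (x ⊓ y) ⊓ y = (x ⊓ y) ⊓ s (x ⊓ y) := by
          ac_rfl
        rw [this, inf_comm, key]
      · refine le_inf inf_le_left ((H _ (x ⊓ y)).mp ?_)
        have : x ⊓ s y ⊓ (x ⊓ y) = (x ⊓ (x ⊓ y)) ⊓ (s y ⊓ y) := by ac_rfl
        rw [this, key, inf_bot_eq]
  · rintro ⟨h1, h2, h3⟩ x y
    have key : ∀ z : α, s z ⊓ z = ⊥ := by
      intro z
      set a := z ⊓ s z with ha
      have e1 : a ⊓ s (a ⊓ z) = a := by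
        have : a ⊓ z = a ⊓ (z ⊓ z) := by rw [ha]; ac_rfl
        rw [this, h3, ha]
        ac_rfl
      have e2 : a ⊓ s (a ⊓ z) = ⊥ := by
        have haz : a ⊓ z = a ⊓ ⊤ := by rw [inf_top_eq, ha]; ac_rfl
        calc a ⊓ s (a ⊓ z) = a ⊓ s (a ⊓ ⊤) := by rw [haz]
          _ = a ⊓ s ⊤ := h3 a ⊤
          _ = ⊥ := by rw [h1, inf_bot_eq]
      rw [inf_comm, ← ha, ← e1, e2]
    constructor
    · intro hxy
      have : x ⊓ s y = x := by rw [← h3, hxy, h2, inf_top_eq]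
      rw [← this]; exact inf_le_right
    · intro hx
      exact le_antisymm (le_trans (inf_le_inf_right y hx) (by rw [key])) bot_le
end

section
/- Let A be a distributive p-algebra and suppose elements a₁, …, aₙ (n ≥ 1) satisfy aᵢ* = ⋁_{j≠i} aⱼ for each i, and ⋁ᵢ aᵢ ≠ 1. Then the set {a₁, …, aₙ} is an antichain; in particular all aᵢ are pairwise distinct and nonzero. -/
/-- Under the hypotheses of the quasiequation `qbₙ` failing, the set
`{a 1, …, a n}` is an antichain; in particular the `a i` are pairwise
distinct and nonzero. -/
theorem stmt_7 {α : Type*} [DistribLattice α] [BoundedOrder α] (s : α → α)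
    (hs : ∀ x y : α, x ⊓ y = ⊥ ↔ x ≤ s y)
    (n : ℕ) (hn : 1 ≤ n) (a : Fin n → α)
    (ha : ∀ i, s (a i) = (Finset.univ.erase i).sup a)
    (htop : Finset.univ.sup a ≠ ⊤) :
    (∀ i j, i ≠ j → ¬ a i ≤ a j) ∧
      (∀ i j, i ≠ j → a i ≠ a j) ∧ (∀ i, a i ≠ ⊥) := by
  have hbot : ∀ i, a i ≠ ⊥ := by
    intro i hi
    have hstop : s (a i) = ⊤ := by
      apply le_antisymm le_top
      rw [← hs]; simp [hi]
    apply htop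
    apply le_antisymm le_top
    rw [← hstop, ha i]
    exact Finset.sup_mono (Finset.erase_subset _ _)
  have hanti : ∀ i j, i ≠ j → ¬ a i ≤ a j := by
    intro i j hij hle
    have hj : a j ≤ s (a i) := by
      rw [ha i]
      exact Finset.le_sup (by simp [Ne.symm hij])
    have : a i ⊓ a i = ⊥ := (hs _ _).mpr (hle.trans hj)
    exact hbot i (by simpa using this)
  exact ⟨hanti, fun i j hij h => hanti i j hij h.le, hbot⟩
end

section
/- Let A be a distributive p-algebra and suppose elements a₁, …, aₙ (n ≥ 1) satisfy aᵢ* = ⋁_{j≠i} aⱼ for each i, and ⋁ᵢ aᵢ ≠ 1. Then for any two distinct subsets I, J of {1,…,n}, the joins ⋁_{i∈I} aᵢ and ⋁_{j∈J} aⱼ are distinct. -/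
/-- Under the hypotheses of the quasiequation `qbₙ` failing, joins over
distinct index sets are distinct. -/
theorem stmt_8 {α : Type*} [DistribLattice α] [BoundedOrder α] (s : α → α)
    (hs : ∀ x y : α, x ⊓ y = ⊥ ↔ x ≤ s y)
    (n : ℕ) (hn : 1 ≤ n) (a : Fin n → α)
    (ha : ∀ i, s (a i) = (Finset.univ.erase i).sup a)
    (htop : Finset.univ.sup a ≠ ⊤) :
    ∀ I J : Finset (Fin n), I ≠ J → I.sup a ≠ J.sup a := by
  have key : ∀ I J : Finset (Fin n), ∀ i : Fin n, i ∈ I → i ∉ J →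
      I.sup a = J.sup a → False := by
    intro I J i hiI hiJ heq
    have h1 : a i ≤ s (a i) := by
      rw [ha i]
      calc a i ≤ I.sup a := Finset.le_sup hiI
        _ = J.sup a := heq
        _ ≤ (Finset.univ.erase i).sup a := Finset.sup_mono (by
            intro j hj
            exact Finset.mem_erase.2 ⟨fun h => hiJ (h ▸ hj), Finset.mem_univ j⟩)
    have hbot : a i = ⊥ := by
      have := (hs (a i) (a i)).2 h1
      simpa using this
    have hstop : s (a i) = ⊤ := by
      have : (⊤ : α) ≤ s (a i) := (hs ⊤ (a i)).1 (by simp [hbot])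
      exact top_le_iff.1 this
    apply htop
    have h2 : (Finset.univ.erase i).sup a = ⊤ := by rw [← ha i, hstop]
    have h3 : (Finset.univ.erase i).sup a ≤ Finset.univ.sup a :=
      Finset.sup_mono (Finset.erase_subset _ _)
    exact top_le_iff.1 (h2 ▸ h3)
  intro I J hne heq
  rcases Finset.not_subset.1 (fun h => hne (Finset.Subset.antisymm (fun x hx => by
      by_contra hxJ
      exact key I J x hx hxJ heq) h)) with ⟨i, hiJ, hiI⟩
  exact key J I i hiJ hiI heq.symm
end

section
/- Let A be a distributive p-algebra and suppose elements a₁, …, aₙ (n ≥ 1) satisfy aᵢ* = ⋁_{j≠i} aⱼ for each i, and ⋁ᵢ aᵢ ≠ 1. Then for every nonempty subset I ⊆ {1,…,n}, (⋁_{i∈I} aᵢ)* = ⋁_{i∉I} aᵢ. -/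
/-- Under the hypotheses of the quasiequation `qbₙ` failing, for every
nonempty `I ⊆ {1,…,n}` we have `(⋁_{i ∈ I} aᵢ)* = ⋁_{i ∉ I} aᵢ`. -/
theorem stmt_10 {α : Type*} [DistribLattice α] [BoundedOrder α] (s : α → α)
    (hs : ∀ x y : α, x ⊓ y = ⊥ ↔ x ≤ s y)
    (n : ℕ) (hn : 1 ≤ n) (a : Fin n → α)
    (ha : ∀ i, s (a i) = (Finset.univ.erase i).sup a)
    (htop : Finset.univ.sup a ≠ ⊤) :
    ∀ I : Finset (Fin n), I.Nonempty → s (I.sup a) = Iᶜ.sup a := by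
  have pw : ∀ i j : Fin n, i ≠ j → a i ⊓ a j = ⊥ := by
    intro i j hij
    refine (hs (a i) (a j)).mpr ?_
    rw [ha j]
    exact Finset.le_sup (Finset.mem_erase.mpr ⟨hij, Finset.mem_univ i⟩)
  have dir1 : ∀ I : Finset (Fin n), Iᶜ.sup a ⊓ I.sup a = ⊥ := by
    intro I
    rw [Finset.sup_inf_sup]
    apply le_bot_iff.mp
    apply Finset.sup_le
    rintro ⟨j, k⟩ hm
    rw [Finset.mem_product] at hm
    have hjk : j ≠ k := fun h => (Finset.mem_compl.mp hm.1) (h ▸ hm.2)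
    exact (pw j k hjk).le
  intro I hI
  induction hI using Finset.Nonempty.cons_induction with
  | singleton i =>
      rw [Finset.sup_singleton, ha i, Finset.compl_singleton]
  | cons i I h hne IH =>
      refine le_antisymm ?_ ((hs _ _).mp (dir1 _))
      set x := s ((Finset.cons i I h).sup a) with hxdef
      have hx : x ⊓ (a i ⊔ I.sup a) = ⊥ := by
        rw [← Finset.sup_cons h]
        exact (hs x _).mpr le_rfl
      have hx1 : x ⊓ a i = ⊥ :=
        le_bot_iff.mp (le_trans (inf_le_inf_left x le_sup_left) hx.le)
      have hx2 : x ⊓ I.sup a = ⊥ :=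
        le_bot_iff.mp (le_trans (inf_le_inf_left x le_sup_right) hx.le)
      have h1 : x ≤ (Finset.univ.erase i).sup a := by
        rw [← ha i]; exact (hs x (a i)).mp hx1
      have h2 : x ≤ Iᶜ.sup a := IH ▸ (hs x _).mp hx2
      refine (le_inf h1 h2).trans ?_
      rw [Finset.sup_inf_sup]
      apply Finset.sup_le
      rintro ⟨j, k⟩ hm
      rw [Finset.mem_product, Finset.mem_erase, Finset.mem_compl] at hm
      by_cases hjk : j = k
      · subst hjk
        rw [inf_idem]
        refine Finset.le_sup (Finset.mem_compl.mpr ?_)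
        rw [Finset.mem_cons]
        rintro (rfl | hj)
        · exact hm.1.1 rfl
        · exact hm.2 hj
      · rw [pw j k hjk]; exact bot_le
end

section
/- A distributive p-algebra A contains a subalgebra isomorphic to B̄ₙ (the p-algebra obtained by adjoining a new top to the Boolean algebra with n atoms) if and only if A fails the quasiequation qbₙ: there exist a₁, …, aₙ ∈ A with aᵢ* = ⋁_{j≠i} aⱼ for all i and ⋁ᵢ aᵢ ≠ 1. -/
open Classical in
/-- A distributive p-algebra contains a subalgebra isomorphic to `B̄ₙ`
(the Boolean algebra with `n` atoms, modelled as `Fin n → Bool`, with a new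
top adjoined) iff the quasiequation `qbₙ` fails in it: there are
`a 1, …, a n` with `(a i)* = ⋁_{j ≠ i} a j` for all `i` and `⋁ i, a i ≠ 1`. -/
theorem stmt_11 {α : Type*} [DistribLattice α] [BoundedOrder α] (s : α → α)
    (hs : ∀ x y : α, x ⊓ y = ⊥ ↔ x ≤ s y) (n : ℕ) (hn : 1 ≤ n) :
    let B := Fin n → Bool
    let star : WithTop B → WithTop B := fun x =>
      if x = ⊤ then ((⊥ : B) : WithTop B)
      else if x = ((⊥ : B) : WithTop B) then ⊤
      else WithTop.map compl x
    (∃ f : WithTop B → α, Function.Injective f ∧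
        (∀ x y, f (x ⊓ y) = f x ⊓ f y) ∧
        (∀ x y, f (x ⊔ y) = f x ⊔ f y) ∧
        f ⊥ = ⊥ ∧ f ⊤ = ⊤ ∧
        (∀ x, f (star x) = s (f x))) ↔
      ∃ a : Fin n → α, (∀ i, s (a i) = (Finset.univ.erase i).sup a) ∧
        Finset.univ.sup a ≠ ⊤ := by
  classical
  intro B star
  have hsbot : s (⊥ : α) = ⊤ :=
    top_le_iff.mp ((hs ⊤ ⊥).mp (by simp))
  have hstop : s (⊤ : α) = ⊥ := by
    have := (hs (s ⊤) ⊤).mpr le_rfl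
    rwa [inf_top_eq] at this
  constructor
  · rintro ⟨f, hinj, hmeet, hjoin, hbot, htop, hstar⟩
    set e : Fin n → B := fun i j => decide (j = i) with he
    have hetop : ∀ i, ((e i : B) : WithTop B) ≠ ⊤ := fun i => WithTop.coe_ne_top
    have hebot : ∀ i, ((e i : B) : WithTop B) ≠ ((⊥ : B) : WithTop B) := by
      intro i h
      have h2 : e i = (⊥ : B) := WithTop.coe_injective h
      have := congrFun h2 i
      simp [he] at this
    have hstar_e : ∀ i, star ((e i : B) : WithTop B) = (((e i)ᶜ : B) : WithTop B) := by
      intro i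
      show (if _ then _ else _) = _
      rw [if_neg (hetop i), if_neg (hebot i)]
      rfl
    have hF : ∀ S : Finset (Fin n),
        f ((S.sup e : B) : WithTop B) = S.sup (fun i => f ((e i : B) : WithTop B)) := by
      intro S
      induction S using Finset.cons_induction with
      | empty => simpa [WithTop.coe_bot] using hbot
      | cons i S hi ih =>
          rw [Finset.sup_cons, Finset.sup_cons, ← ih, ← hjoin, WithTop.coe_sup]
    have hcompl : ∀ i : Fin n, (e i)ᶜ = (Finset.univ.erase i).sup e := by
      intro i
      funext j
      rw [Finset.sup_apply]
      by_cases hji : j = i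
      · subst hji
        have hz : (Finset.univ.erase j).sup (fun k => e k j) = ⊥ := by
          rw [Finset.sup_eq_bot_iff]
          intro k hk
          have hkj := (Finset.mem_erase.mp hk).1
          simp [he, Ne.symm hkj]
        rw [hz]
        show (!(decide (j = j))) = false
        simp
      · have hj : j ∈ Finset.univ.erase i := Finset.mem_erase.mpr ⟨hji, Finset.mem_univ j⟩
        have h1 : e j j ≤ (Finset.univ.erase i).sup (fun k => e k j) :=
          Finset.le_sup (f := fun k => e k j) hj
        have h2 : e j j = ⊤ := by simp [he]
        have h3 : (Finset.univ.erase i).sup (fun k => e k j) = ⊤ :=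
          top_le_iff.mp (h2 ▸ h1)
        rw [h3]
        show (!(decide (j = i))) = true
        simp [hji]
    refine ⟨fun i => f ((e i : B) : WithTop B), ?_, ?_⟩
    · intro i
      have h := hstar ((e i : B) : WithTop B)
      rw [hstar_e i, hcompl i, hF] at h
      exact h.symm
    · have huniv : Finset.univ.sup e = (⊤ : B) := by
        funext j
        rw [Finset.sup_apply]
        have h1 : e j j ≤ Finset.univ.sup (fun k => e k j) :=
          Finset.le_sup (f := fun k => e k j) (Finset.mem_univ j)
        have h2 : e j j = ⊤ := by simp [he]
        have h3 : Finset.univ.sup (fun k => e k j) = ⊤ := top_le_iff.mp (h2 ▸ h1)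
        rw [h3]; rfl
      intro hcon
      rw [← hF, huniv, ← htop] at hcon
      exact WithTop.coe_ne_top (hinj hcon)
  · rintro ⟨a, ha, hatop⟩
    have hdisj : ∀ i j : Fin n, i ≠ j → a i ⊓ a j = ⊥ := by
      intro i j hij
      rw [hs, ha j]
      exact Finset.le_sup (Finset.mem_erase.mpr ⟨hij, Finset.mem_univ i⟩)
    have hanb : ∀ i, a i ≠ ⊥ := by
      intro i h
      apply hatop
      apply top_le_iff.mp
      have h2 : s (a i) = ⊤ := by rw [h, hsbot]
      rw [← h2, ha i]
      exact Finset.sup_mono (Finset.erase_subset i _)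
    have hinter : ∀ S T : Finset (Fin n), S.sup a ⊓ T.sup a = (S ∩ T).sup a := by
      intro S T
      apply le_antisymm
      · rw [Finset.sup_inf_distrib_right]
        apply Finset.sup_le
        intro i hi
        rw [Finset.sup_inf_distrib_left]
        apply Finset.sup_le
        intro j hj
        by_cases hij : i = j
        · subst hij
          rw [inf_idem]
          exact Finset.le_sup (Finset.mem_inter.mpr ⟨hi, hj⟩)
        · rw [hdisj i j hij]; exact bot_le
      · exact le_inf (Finset.sup_mono Finset.inter_subset_left)
          (Finset.sup_mono Finset.inter_subset_right)
    have happ_inf : ∀ (b b' : B) i, (b ⊓ b') i = (b i && b' i) := fun _ _ _ => rfl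
    have happ_sup : ∀ (b b' : B) i, (b ⊔ b') i = (b i || b' i) := fun _ _ _ => rfl
    have happ_compl : ∀ (b : B) i, (bᶜ) i = !(b i) := fun _ _ => rfl
    have happ_bot : ∀ i, (⊥ : B) i = false := fun _ => rfl
    set g : B → α := fun b => (Finset.univ.filter (fun i => b i = true)).sup a with hg
    have hfil_inf : ∀ b b' : B,
        Finset.univ.filter (fun i => (b ⊓ b') i = true) =
          Finset.univ.filter (fun i => b i = true) ∩
            Finset.univ.filter (fun i => b' i = true) := by
      intro b b'
      ext i
      simp only [Finset.mem_filter, Finset.mem_inter, Finset.mem_univ, true_and,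
        happ_inf, Bool.and_eq_true]
    have hfil_sup : ∀ b b' : B,
        Finset.univ.filter (fun i => (b ⊔ b') i = true) =
          Finset.univ.filter (fun i => b i = true) ∪
            Finset.univ.filter (fun i => b' i = true) := by
      intro b b'
      ext i
      simp only [Finset.mem_filter, Finset.mem_union, Finset.mem_univ, true_and,
        happ_sup, Bool.or_eq_true]
    have hfil_compl : ∀ b : B,
        Finset.univ.filter (fun i => bᶜ i = true) =
          Finset.univ \ Finset.univ.filter (fun i => b i = true) := by
      intro b
      ext i
      simp only [Finset.mem_filter, Finset.mem_sdiff, Finset.mem_univ, true_and,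
        happ_compl]
      cases b i <;> simp
    have hgbot : g (⊥ : B) = ⊥ := by
      have h : Finset.univ.filter (fun i => (⊥ : B) i = true) = ∅ := by
        ext i; simp [happ_bot]
      rw [hg]; simp only [h, Finset.sup_empty]
    have hginf : ∀ b b' : B, g (b ⊓ b') = g b ⊓ g b' := by
      intro b b'
      rw [hg]
      simp only [hfil_inf]
      exact (hinter _ _).symm
    have hgsup : ∀ b b' : B, g (b ⊔ b') = g b ⊔ g b' := by
      intro b b'
      rw [hg]
      simp only [hfil_sup]
      exact Finset.sup_union
    have hglt : ∀ b : B, g b ≠ ⊤ := by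
      intro b h
      apply hatop
      apply top_le_iff.mp
      rw [← h, hg]
      exact Finset.sup_mono (Finset.filter_subset _ _)
    have hkey : ∀ (j : Fin n) (T : Finset (Fin n)), j ∉ T → a j ≤ T.sup a → a j = ⊥ := by
      intro j T hjT hle
      have h1 : a j ⊓ T.sup a = ⊥ := by
        rw [Finset.sup_inf_distrib_left, Finset.sup_eq_bot_iff]
        intro k hk
        exact hdisj j k (by rintro rfl; exact hjT hk)
      rwa [inf_eq_left.mpr hle] at h1
    have hginj : ∀ b b' : B, g b = g b' → b = b' := by
      have key : ∀ c c' : B, g c = g c' → ∀ j, c j = true → c' j = true := by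
        intro c c' hcc j hcj
        by_contra hcj'
        have hjmem : j ∈ Finset.univ.filter (fun i => c i = true) := by simp [hcj]
        have h1 : a j ≤ g c' := hcc ▸ Finset.le_sup hjmem
        have hj' : j ∉ Finset.univ.filter (fun i => c' i = true) := by simp [hcj']
        exact hanb j (hkey j _ hj' h1)
      intro b b' hbb
      funext j
      cases hbj : b j with
      | true => exact (key b b' hbb j hbj).symm
      | false =>
        cases hbj' : b' j with
        | true => exact absurd (key b' b hbb.symm j hbj') (by rw [hbj]; simp)
        | false => rfl
    refine ⟨fun x => x.elim ⊤ g, ?_, ?_, ?_, ?_, rfl, ?_⟩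
    · intro x y hxy
      induction x using WithTop.recTopCoe with
      | top =>
        induction y using WithTop.recTopCoe with
        | top => rfl
        | coe b => exact absurd hxy.symm (hglt b)
      | coe b =>
        induction y using WithTop.recTopCoe with
        | top => exact absurd hxy (hglt b)
        | coe b' => exact congrArg _ (hginj b b' hxy)
    · intro x y
      induction x using WithTop.recTopCoe with
      | top => rw [top_inf_eq]; exact (top_inf_eq _).symm
      | coe b =>
        induction y using WithTop.recTopCoe with
        | top => rw [inf_top_eq]; exact (inf_top_eq _).symm
        | coe b' => rw [← WithTop.coe_inf]; exact hginf b b'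
    · intro x y
      induction x using WithTop.recTopCoe with
      | top => rw [top_sup_eq]; exact (top_sup_eq _).symm
      | coe b =>
        induction y using WithTop.recTopCoe with
        | top => rw [sup_top_eq]; exact (sup_top_eq _).symm
        | coe b' => rw [← WithTop.coe_sup]; exact hgsup b b'
    · show (⊥ : WithTop B).elim ⊤ g = ⊥
      rw [← WithTop.coe_bot]
      exact hgbot
    · intro x
      induction x using WithTop.recTopCoe with
      | top =>
        show (star ⊤).elim ⊤ g = s ⊤
        have : star ⊤ = ((⊥ : B) : WithTop B) := if_pos rfl
        rw [this, hstop]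
        exact hgbot
      | coe b =>
        by_cases hb : b = ⊥
        · subst hb
          have h1 : star ((⊥ : B) : WithTop B) = ⊤ := by
            show (if _ then _ else _) = _
            rw [if_neg WithTop.coe_ne_top, if_pos rfl]
          show (star ((⊥ : B) : WithTop B)).elim ⊤ g = s (g ⊥)
          rw [h1, hgbot, hsbot]
          rfl
        · have h1 : star (b : WithTop B) = ((bᶜ : B) : WithTop B) := by
            show (if _ then _ else _) = _
            rw [if_neg WithTop.coe_ne_top,
              if_neg (fun h => hb (WithTop.coe_injective h))]
            rfl
          show (star (b : WithTop B)).elim ⊤ g = s (g b)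
          rw [h1]
          show g bᶜ = s (g b)
          have hdisjc : g bᶜ ⊓ g b = ⊥ := by
            rw [hg]
            simp only [hinter, hfil_compl, Finset.sdiff_inter_self, Finset.sup_empty]
          apply le_antisymm
          · exact (hs _ _).mp hdisjc
          · -- s (g b) ≤ g bᶜ
            have hz : s (g b) ⊓ g b = ⊥ := (hs (s (g b)) (g b)).mpr le_rfl
            obtain ⟨i, hbi⟩ : ∃ i, b i = true := by
              by_contra hcon
              push_neg at hcon
              exact hb (funext fun i => by
                have := hcon i
                simpa [Bool.not_eq_true, Pi.bot_apply, happ_bot] using this)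
            have hile : a i ≤ g b := by
              rw [hg]
              exact Finset.le_sup (by simp [hbi])
            have hzai : s (g b) ⊓ a i = ⊥ :=
              le_bot_iff.mp ((inf_le_inf_left _ hile).trans hz.le)
            have hz1 : s (g b) ≤ Finset.univ.sup a := by
              have := (hs (s (g b)) (a i)).mp hzai
              rw [ha i] at this
              exact this.trans (Finset.sup_mono (Finset.erase_subset i _))
            calc s (g b) = s (g b) ⊓ Finset.univ.sup a := (inf_eq_left.mpr hz1).symm
              _ = Finset.univ.sup (fun j => s (g b) ⊓ a j) :=
                  Finset.sup_inf_distrib_left _ _ _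
              _ ≤ g bᶜ := by
                  apply Finset.sup_le
                  intro j _
                  by_cases hbj : b j = true
                  · have h2 : s (g b) ⊓ a j ≤ s (g b) ⊓ g b :=
                      inf_le_inf_left _ (by rw [hg]; exact Finset.le_sup (by simp [hbj]))
                    rw [hz] at h2
                    exact h2.trans bot_le
                  · refine inf_le_right.trans ?_
                    rw [hg]
                    have hjf : b j = false := by
                      cases h : b j
                      · rfl
                      · exact absurd h hbj
                    exact Finset.le_sup (by simp [happ_compl, hjf])
end

section
/- Let f : X → Y be an order-preserving map between finite posets such that f(max ↑x) = max ↑f(x) for every x ∈ X (a pp-morphism). Then the map ε(f) : Up(Y) → Up(X) defined by ε(f)(U) = ↑(f⁻¹(U)) is a homomorphism of p-algebras (preserves ∩, ∪, *, ∅, and the top). -/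
/-- The set of maximal elements of the principal upset `↑x` in a poset. -/
def maxUp {X : Type*} [PartialOrder X] (x : X) : Set X :=
  {y | x ≤ y ∧ ∀ z, y ≤ z → z = y}

lemma exists_maxUp {Y : Type*} [PartialOrder Y] [Fintype Y] (a : Y) :
    ∃ m, a ≤ m ∧ m ∈ maxUp a := by
  obtain ⟨m, hm, hmax⟩ := Set.Finite.exists_maximalFor id {b | a ≤ b}
    (Set.toFinite _) ⟨a, le_refl a⟩
  exact ⟨m, hm, hm, fun z hz => le_antisymm (hmax (le_trans hm hz) hz) hz⟩

/-- If `f : X → Y` is a pp-morphism of finite posets (order-preserving with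
`f(max ↑x) = max ↑(f x)`), then `ε(f) : Up(Y) → Up(X)`, `U ↦ ↑(f⁻¹ U)`, is a
homomorphism of p-algebras: it preserves `∩`, `∪`, `*`, `∅` and the top. -/
theorem stmt_13 {X Y : Type*} [PartialOrder X] [PartialOrder Y]
    [Fintype X] [Fintype Y] (f : X → Y) (hmono : Monotone f)
    (hpp : ∀ x : X, f '' maxUp x = maxUp (f x)) :
    let starX : Set X → Set X := fun U => {x | ¬ ∃ u ∈ U, x ≤ u}
    let starY : Set Y → Set Y := fun U => {y | ¬ ∃ u ∈ U, y ≤ u}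
    let E : Set Y → Set X := fun U => {x | ∃ z, f z ∈ U ∧ z ≤ x}
    (∀ U V : Set Y, IsUpperSet U → IsUpperSet V → E (U ∩ V) = E U ∩ E V) ∧
    (∀ U V : Set Y, IsUpperSet U → IsUpperSet V → E (U ∪ V) = E U ∪ E V) ∧
    E (∅ : Set Y) = (∅ : Set X) ∧ E (Set.univ : Set Y) = (Set.univ : Set X) ∧
    (∀ U : Set Y, IsUpperSet U → E (starY U) = starX (E U)) := by
  intro starX starY E
  -- For an upper set U, E U = f ⁻¹' U
  have hE : ∀ U : Set Y, IsUpperSet U → E U = f ⁻¹' U := by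
    intro U hU
    ext x
    constructor
    · rintro ⟨z, hz, hzx⟩
      exact hU (hmono hzx) hz
    · intro hx
      exact ⟨x, hx, le_refl x⟩
  refine ⟨?_, ?_, ?_, ?_, ?_⟩
  · intro U V hU hV
    rw [hE _ (hU.inter hV), hE _ hU, hE _ hV]; rfl
  · intro U V hU hV
    rw [hE _ (hU.union hV), hE _ hU, hE _ hV]; rfl
  · ext x
    simp [E]
  · ext x
    simp only [Set.mem_univ, iff_true]
    exact ⟨x, trivial, le_refl x⟩
  · intro U hU
    have hstar : IsUpperSet (starY U) := by
      intro a b hab ha hb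
      exact ha (by obtain ⟨u, hu, hau⟩ := hb; exact ⟨u, hu, le_trans hab hau⟩)
    rw [hE _ hstar]
    ext x
    simp only [Set.mem_preimage, starY, starX, Set.mem_setOf_eq]
    constructor
    · intro h ⟨u, hu, hxu⟩
      obtain ⟨z, hz, hzu⟩ := hu
      exact h ⟨f u, hU (hmono hzu) hz, hmono hxu⟩
    · intro h ⟨u, hu, hfxu⟩
      -- get a maximal element above u in Y
      obtain ⟨m, hum, hm⟩ := exists_maxUp u
      have hmfx : m ∈ maxUp (f x) := ⟨le_trans hfxu hum, hm.2⟩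
      rw [← hpp x] at hmfx
      obtain ⟨z, hz, hfz⟩ := hmfx
      exact h ⟨z, ⟨z, hfz ▸ hU hum hu, le_refl z⟩, hz.1⟩
end

section
/- The p-algebra B̄ₙ does not satisfy the quasiequation qbₙ: evaluating the variables x₁, …, xₙ at the n atoms of Bₙ satisfies xᵢ* = ⋁_{j≠i} xⱼ for all i, yet ⋁ᵢ xᵢ = e ≠ 1. -/
lemma coe_sup_aux {n : ℕ} (s : Finset (Fin n)) (f : Fin n → (Fin n → Bool)) :
    s.sup (fun j => ((f j : Fin n → Bool) : WithTop (Fin n → Bool)))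
      = ((s.sup f : Fin n → Bool) : WithTop (Fin n → Bool)) :=
  (Finset.comp_sup_eq_sup_comp (fun x : Fin n → Bool => (x : WithTop (Fin n → Bool)))
    (fun a b => WithTop.coe_sup a b) WithTop.coe_bot).symm

open Classical in
/-- `B̄ₙ` fails the quasiequation `qbₙ`: evaluating the variables at the `n`
atoms of `Bₙ` satisfies `xᵢ* = ⋁_{j≠i} xⱼ` for every `i`, yet
`⋁ᵢ xᵢ = e ≠ 1`, where `e` is the top of `Bₙ`. -/
theorem stmt_14 (n : ℕ) (hn : 1 ≤ n) :
    let B := Fin n → Bool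
    let star : WithTop B → WithTop B := fun x =>
      if x = ⊤ then ((⊥ : B) : WithTop B)
      else if x = ((⊥ : B) : WithTop B) then ⊤
      else WithTop.map compl x
    let atom : Fin n → WithTop B := fun i => ((fun j => decide (j = i) : B) : WithTop B)
    (∀ i, star (atom i) = (Finset.univ.erase i).sup atom) ∧
    Finset.univ.sup atom = ((⊤ : B) : WithTop B) ∧
    ((⊤ : B) : WithTop B) ≠ (⊤ : WithTop B) := by
  intro B star atom
  refine ⟨?_, ?_, ?_⟩
  · intro i
    have h1 : atom i ≠ (⊤ : WithTop B) := WithTop.coe_ne_top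
    have h2 : atom i ≠ ((⊥ : B) : WithTop B) := by
      intro h
      have := congrFun (WithTop.coe_injective h) i
      simp at this
    show star (atom i) = _
    simp only [star, if_neg h1, if_neg h2, atom]
    rw [coe_sup_aux, WithTop.map_coe]
    congr 1
    funext k
    rw [Finset.sup_apply]
    change (decide (k = i))ᶜ = _
    by_cases hk : k = i
    · subst hk
      have h3 : (decide (k = k))ᶜ = (⊥ : Bool) := by simp
      rw [h3]
      symm
      rw [Finset.sup_eq_bot_iff]
      intro j hj
      have : j ≠ k := (Finset.mem_erase.mp hj).1
      simp [Ne.symm this]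
    · have hmem : k ∈ Finset.univ.erase i := Finset.mem_erase.mpr ⟨hk, Finset.mem_univ k⟩
      have h4 : (decide (k = k) : Bool) ≤ (Finset.univ.erase i).sup fun a => (decide (k = a) : Bool) :=
        Finset.le_sup (f := fun a => (decide (k = a) : Bool)) hmem
      have h5 : (decide (k = k) : Bool) = ⊤ := by simp
      rw [h5] at h4
      have h6 := top_le_iff.mp h4
      rw [h6]
      simp [hk]
  · show Finset.univ.sup atom = _
    simp only [atom]
    rw [coe_sup_aux]
    congr 1
    funext k
    rw [Finset.sup_apply]
    change _ = (⊤ : Bool)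
    have h4 : (decide (k = k) : Bool) ≤ Finset.univ.sup fun a => (decide (k = a) : Bool) :=
      Finset.le_sup (f := fun a => (decide (k = a) : Bool)) (Finset.mem_univ k)
    have h5 : (decide (k = k) : Bool) = ⊤ := by simp
    rw [h5] at h4
    exact top_le_iff.mp h4
  · exact WithTop.coe_ne_top
end

section
/- A distributive p-algebra satisfies qb₁ (x₁* = ⋁_{j≠1} xⱼ = 0 implies x₁ = 1) if and only if it is a Boolean algebra, i.e., x ∨ x* = 1 holds for all x. -/
/-- A distributive p-algebra satisfies `qb₁` (`x* = 0 → x = 1`) iff it is a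
Boolean algebra, i.e. `x ⊔ x* = 1` holds for all `x`. -/
theorem stmt_15 {α : Type*} [DistribLattice α] [BoundedOrder α] (s : α → α)
    (hs : ∀ x y : α, x ⊓ y = ⊥ ↔ x ≤ s y) :
    (∀ x : α, s x = ⊥ → x = ⊤) ↔ (∀ x : α, x ⊔ s x = ⊤) := by
  constructor
  · intro h x
    apply h
    have hy : s (x ⊔ s x) ⊓ (x ⊔ s x) = ⊥ := (hs _ _).mpr le_rfl
    rw [inf_sup_left, sup_eq_bot_iff] at hy
    have h1 : s (x ⊔ s x) ≤ s x := (hs _ _).mp hy.1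
    have := hy.2
    rwa [inf_eq_left.mpr h1] at this
  · intro h x hx
    have := h x
    rwa [hx, sup_bot_eq] at this
end
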